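/- Let a = (1,1), let b ∈ R_+^2 with b ≠ a, let δ > 0, and let b' be the point on the segment from a to b with |b' - a| = |b - a|/(1+δ). For any r on the segment from b' to b, set κ = |r - b| / |b' - b| ∈ [0,1]. Then the point r' := r(1+δ) - κ δ a satisfies: r' lies on the ray from the origin through b, between b and b(1+δ). -/

import Mathlib

/-!
Write `r = b + κ (b' - b)`; on the segment the parameter `κ ∈ [0, 1]` is exactly the distance
ratio `|r - b| / |b' - b|`. Since `b' - b = δ/(1+δ) (a - b)`, the drift term `-κδa` cancels the
`a`-component of `(1+δ) r`, leaving `r' = (1 + (1 - κ) δ) b`.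
-/

section Segment

variable {E : Type*} [NormedAddCommGroup E] [NormedSpace ℝ E] {x y z : E}

theorem exists_mem_Icc_sub_eq_smul_of_mem_segment (h : z ∈ segment ℝ x y) :
    ∃ θ ∈ Set.Icc (0 : ℝ) 1, z - y = θ • (x - y) := by
  rw [segment_symm, segment_eq_image'] at h
  obtain ⟨θ, hθ, rfl⟩ := h
  exact ⟨θ, hθ, add_sub_cancel_left y _⟩

/-- The distance ratio is well behaved also when `x = y` (then `z = y` and the ratio is `0`). -/
theorem norm_sub_div_norm_sub_mem_Icc_and_sub_eq_smul_of_mem_segment (h : z ∈ segment ℝ x y) :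
    ‖z - y‖ / ‖x - y‖ ∈ Set.Icc (0 : ℝ) 1 ∧ z - y = (‖z - y‖ / ‖x - y‖) • (x - y) := by
  obtain ⟨θ, hθ, hzy⟩ := exists_mem_Icc_sub_eq_smul_of_mem_segment h
  rcases eq_or_ne (x - y) 0 with hxy | hxy
  · simp [hzy, hxy]
  · have hratio : ‖z - y‖ / ‖x - y‖ = θ := by
      rw [hzy, norm_smul, Real.norm_of_nonneg hθ.1, mul_div_cancel_right₀ _ (norm_ne_zero_iff.mpr hxy)]
    rw [hratio]
    exact ⟨hθ, hzy⟩

end Segment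

theorem one_add_smul_sub_smul_eq_smul {V : Type*} [AddCommGroup V] [Module ℝ V] {a b r : V}
    {δ κ : ℝ} (hδ : 1 + δ ≠ 0) (hr : r - b = κ • (a + (1 / (1 + δ)) • (b - a) - b)) :
    (1 + δ) • r - (κ * δ) • a = (1 + (1 - κ) * δ) • b := by
  rw [← sub_add_cancel r b, hr]
  match_scalars <;> field_simp <;> ring

theorem stmt8_general (a b b' r r' : EuclideanSpace ℝ (Fin 2)) (δ : ℝ) (hδ : 0 < δ)
    (hb' : b' = a + (1 / (1 + δ)) • (b - a))
    (hr : r ∈ segment ℝ b' b)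
    (κ : ℝ) (hκ : κ = ‖r - b‖ / ‖b' - b‖)
    (hr' : r' = (1 + δ) • r - (κ * δ) • a) :
    ∃ s : ℝ, s ∈ Set.Icc (1 : ℝ) (1 + δ) ∧ r' = s • b := by
  obtain ⟨⟨hκ0, hκ1⟩, hrb⟩ := norm_sub_div_norm_sub_mem_Icc_and_sub_eq_smul_of_mem_segment hr
  rw [← hκ] at hκ0 hκ1 hrb
  rw [hb'] at hrb
  refine ⟨1 + (1 - κ) * δ, ⟨by nlinarith, by nlinarith⟩, ?_⟩
  rw [hr']
  exact one_add_smul_sub_smul_eq_smul (by positivity) hrb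

/-- With `a = (1,1)`, `b ≠ a`, `δ > 0`, `b'` the point on the
segment from `a` to `b` with `|b' - a| = |b - a|/(1+δ)`, and `r` on the
segment from `b'` to `b` with `κ = |r - b|/|b' - b|`, the point
`r' = (1+δ)r - κδa` lies on the ray from the origin through `b`, between `b`
and `(1+δ)b`. Distances are Euclidean. -/
theorem stmt8 (a b b' r r' : EuclideanSpace ℝ (Fin 2)) (δ : ℝ) (hδ : 0 < δ)
    (ha : a = (EuclideanSpace.equiv (Fin 2) ℝ).symm ![1, 1]) (hab : b ≠ a)
    (hb' : b' = a + (1 / (1 + δ)) • (b - a))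
    (hr : r ∈ segment ℝ b' b)
    (κ : ℝ) (hκ : κ = ‖r - b‖ / ‖b' - b‖)
    (hr' : r' = (1 + δ) • r - (κ * δ) • a) :
    ∃ s : ℝ, s ∈ Set.Icc (1 : ℝ) (1 + δ) ∧ r' = s • b :=
  stmt8_general a b b' r r' δ hδ hb' hr κ hκ hr'
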